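/- arXiv:1101.4339 — 9 statements merged into one kernel-verified Lean document; each statement's English description precedes it below -/
import Mathlib

section
/- Let k be an integer and define integer sequences P_n, Q_n by P_1 = 2k, Q_1 = 1, and P_{n+1} = k(P_n² + Q_n²), Q_{n+1} = P_n·Q_n for n ≥ 1. If a prime p divides both P_n and P_m for some m ≠ n, then p divides k. -/
/-!
If `p ∤ k`, then `p` never divides both `P j` and `Q j`: a common factor of `P (j+1)` and
`Q (j+1) = P j * Q j` divides `P j ^ 2 + Q j ^ 2` and one of `P j`, `Q j`, hence both, and
`Q 1 = 1`. On the other hand, once `p ∣ P a`, the product recursion makes `p ∣ Q j` for every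
`j > a`, so `p` cannot divide a later `P b`.
-/

theorem Prime.dvd_and_dvd_of_dvd_sq_add_sq {R : Type*} [CommRing R] {p x y : R} (hp : Prime p)
    (hsum : p ∣ x ^ 2 + y ^ 2) (hprod : p ∣ x * y) : p ∣ x ∧ p ∣ y := by
  rcases hp.dvd_mul.mp hprod with hx | hy
  · exact ⟨hx, hp.dvd_of_dvd_pow ((dvd_add_right (dvd_pow hx two_ne_zero)).mp hsum)⟩
  · exact ⟨hp.dvd_of_dvd_pow ((dvd_add_left (dvd_pow hy two_ne_zero)).mp hsum), hy⟩

theorem not_dvd_P_and_Q {R : Type*} [CommRing R] {k p : R} {P Q : ℕ → R} (hp : Prime p)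
    (hk : ¬ p ∣ k) (hQ1 : ¬ p ∣ Q 1)
    (hP : ∀ n : ℕ, 1 ≤ n → P (n + 1) = k * (P n ^ 2 + Q n ^ 2))
    (hQ : ∀ n : ℕ, 1 ≤ n → Q (n + 1) = P n * Q n) (j : ℕ) (hj : 1 ≤ j) :
    ¬ (p ∣ P j ∧ p ∣ Q j) := by
  induction j, hj using Nat.le_induction with
  | base => exact fun h => hQ1 h.2
  | succ j hj ih =>
    rintro ⟨hPj, hQj⟩
    rw [hP j hj] at hPj
    rw [hQ j hj] at hQj
    exact ih (hp.dvd_and_dvd_of_dvd_sq_add_sq ((hp.dvd_mul.mp hPj).resolve_left hk) hQj)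

theorem dvd_Q_of_dvd_P {M : Type*} [CommMonoid M] {p : M} {P Q : ℕ → M}
    (hQ : ∀ n : ℕ, 1 ≤ n → Q (n + 1) = P n * Q n) {a : ℕ} (ha : 1 ≤ a) (hPa : p ∣ P a)
    (j : ℕ) (hj : a < j) : p ∣ Q j := by
  induction j, hj using Nat.le_induction with
  | base => exact hQ a ha ▸ dvd_mul_of_dvd_left hPa _
  | succ j hj ih => exact hQ j (by omega) ▸ dvd_mul_of_dvd_right ih _

theorem stmt4_general (k : ℤ) (P Q : ℕ → ℤ)
    (hQ1 : Q 1 = 1)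
    (hP : ∀ n : ℕ, 1 ≤ n → P (n + 1) = k * (P n ^ 2 + Q n ^ 2))
    (hQ : ∀ n : ℕ, 1 ≤ n → Q (n + 1) = P n * Q n)
    (p : ℕ) (hp : p.Prime) (m n : ℕ) (hm : 1 ≤ m) (hn : 1 ≤ n) (hmn : m ≠ n)
    (hdvdn : (p : ℤ) ∣ P n) (hdvdm : (p : ℤ) ∣ P m) :
    (p : ℤ) ∣ k := by
  by_contra hk
  have hp' : Prime (p : ℤ) := Nat.prime_iff_prime_int.mp hp
  have coprime := not_dvd_P_and_Q hp' hk (hQ1 ▸ hp'.not_dvd_one) hP hQ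
  rcases lt_or_gt_of_ne hmn with h | h
  · exact coprime n hn ⟨hdvdn, dvd_Q_of_dvd_P hQ hm hdvdm n h⟩
  · exact coprime m hm ⟨hdvdm, dvd_Q_of_dvd_P hQ hn hdvdn m h⟩

theorem stmt4 (k : ℤ) (P Q : ℕ → ℤ)
    (hP1 : P 1 = 2 * k) (hQ1 : Q 1 = 1)
    (hP : ∀ n : ℕ, 1 ≤ n → P (n + 1) = k * (P n ^ 2 + Q n ^ 2))
    (hQ : ∀ n : ℕ, 1 ≤ n → Q (n + 1) = P n * Q n)
    (p : ℕ) (hp : p.Prime) (m n : ℕ) (hm : 1 ≤ m) (hn : 1 ≤ n) (hmn : m ≠ n)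
    (hdvdn : (p : ℤ) ∣ P n) (hdvdm : (p : ℤ) ∣ P m) :
    (p : ℤ) ∣ k :=
  stmt4_general k P Q hQ1 hP hQ p hp m n hm hn hmn hdvdn hdvdm
end

section
/- Let k be an integer not divisible by 3, and define P_1 = 2k, Q_1 = 1, P_{n+1} = k(P_n² + Q_n²), Q_{n+1} = P_n·Q_n. Set δ_n = k·P_n. Then for all n ≥ 1, δ_n ≡ 2 (mod 3); in particular δ_n is not a perfect square for any n. -/
/-!
Everything is read modulo 3, where every nonzero residue squares to 1. Since `3 ∤ k`,
induction on `n ≥ 1` shows `P n ≡ 2k` and `Q n ≢ 0`: indeed `k((2k)² + Q²) ≡ k(1 + 1)`.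
Hence `k P n ≡ 2k² ≡ 2`, and `2` is not a square mod 3.
-/

namespace ZMod

theorem sq_eq_one_of_ne_zero_three : ∀ a : ZMod 3, a ≠ 0 → a ^ 2 = 1 := by decide

theorem not_isSquare_two_three : ¬ IsSquare (2 : ZMod 3) := by decide

end ZMod

theorem Int.not_isSquare_of_modEq_two_three {x : ℤ} (h : x ≡ 2 [ZMOD 3]) : ¬ IsSquare x := by
  intro hx
  have hcast : ((x : ℤ) : ZMod 3) = 2 := by
    simpa using (ZMod.intCast_eq_intCast_iff x 2 3).mpr h
  exact ZMod.not_isSquare_two_three (hcast ▸ hx.map (Int.castRingHom (ZMod 3)))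

theorem cast_P_eq_two_mul_and_cast_Q_ne_zero {k : ℤ} (hk : ¬ (3 : ℤ) ∣ k) {P Q : ℕ → ℤ}
    (hP1 : P 1 = 2 * k) (hQ1 : Q 1 = 1)
    (hP : ∀ n : ℕ, 1 ≤ n → P (n + 1) = k * (P n ^ 2 + Q n ^ 2))
    (hQ : ∀ n : ℕ, 1 ≤ n → Q (n + 1) = P n * Q n) {n : ℕ} (hn : 1 ≤ n) :
    (P n : ZMod 3) = 2 * k ∧ (Q n : ZMod 3) ≠ 0 := by
  have hk0 : (k : ZMod 3) ≠ 0 := by rwa [Ne, ZMod.intCast_zmod_eq_zero_iff_dvd]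
  induction n, hn using Nat.le_induction with
  | base => simp [hP1, hQ1]
  | succ m hm ih =>
    obtain ⟨hPm, hQm⟩ := ih
    have hk2 := ZMod.sq_eq_one_of_ne_zero_three _ hk0
    have hq2 := ZMod.sq_eq_one_of_ne_zero_three _ hQm
    constructor
    · rw [hP m hm]
      push_cast
      rw [hPm]
      linear_combination (norm := ring_nf) (4 * (k : ZMod 3)) * hk2 + (k : ZMod 3) * hq2
      reduce_mod_char
    · rw [hQ m hm]
      push_cast
      rw [hPm]
      exact mul_ne_zero (mul_ne_zero (by decide) hk0) hQm

theorem mul_P_modEq_two {k : ℤ} (hk : ¬ (3 : ℤ) ∣ k) {P Q : ℕ → ℤ}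
    (hP1 : P 1 = 2 * k) (hQ1 : Q 1 = 1)
    (hP : ∀ n : ℕ, 1 ≤ n → P (n + 1) = k * (P n ^ 2 + Q n ^ 2))
    (hQ : ∀ n : ℕ, 1 ≤ n → Q (n + 1) = P n * Q n) {n : ℕ} (hn : 1 ≤ n) :
    k * P n ≡ 2 [ZMOD 3] := by
  have hk0 : (k : ZMod 3) ≠ 0 := by rwa [Ne, ZMod.intCast_zmod_eq_zero_iff_dvd]
  refine (ZMod.intCast_eq_intCast_iff _ _ 3).mp ?_
  push_cast
  rw [(cast_P_eq_two_mul_and_cast_Q_ne_zero hk hP1 hQ1 hP hQ hn).1]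
  linear_combination 2 * ZMod.sq_eq_one_of_ne_zero_three _ hk0

theorem stmt6 (k : ℤ) (hk : ¬ (3 : ℤ) ∣ k) (P Q : ℕ → ℤ)
    (hP1 : P 1 = 2 * k) (hQ1 : Q 1 = 1)
    (hP : ∀ n : ℕ, 1 ≤ n → P (n + 1) = k * (P n ^ 2 + Q n ^ 2))
    (hQ : ∀ n : ℕ, 1 ≤ n → Q (n + 1) = P n * Q n)
    (δ : ℕ → ℤ) (hδ : ∀ n, δ n = k * P n) :
    ∀ n : ℕ, 1 ≤ n → δ n ≡ 2 [ZMOD 3] ∧ ¬ IsSquare (δ n) := by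
  intro n hn
  have hmod : δ n ≡ 2 [ZMOD 3] := hδ n ▸ mul_P_modEq_two hk hP1 hQ1 hP hQ hn
  exact ⟨hmod, Int.not_isSquare_of_modEq_two_three hmod⟩
end

section
/- Let k be an integer with k ≡ 2 (mod 5) or k ≡ 3 (mod 5), and define P_1 = 2k, Q_1 = 1, P_{n+1} = k(P_n² + Q_n²), Q_{n+1} = P_n·Q_n, and δ_n = k·P_n. Then δ_n ≡ 3 (mod 5) for all n ≥ 1; in particular neither δ_n nor −δ_n is a perfect square in ℤ for any n. -/
/-! Reduce modulo 5. There `k = ±2`, so `(2k)² = 1`, and this single relation keeps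
`P n = 2k` and `(Q n)² = 1` invariant under the recurrence. Hence `δ n = 2k² = 3`,
and neither `3` nor `-3 = 2` is a square modulo 5. -/

theorem eq_two_mul_and_sq_eq_one_of_recurrence {R : Type*} [CommRing R] {k : R}
    (hk : (2 * k) ^ 2 = 1) {P Q : ℕ → R} (hP1 : P 1 = 2 * k) (hQ1 : Q 1 = 1)
    (hP : ∀ n, 1 ≤ n → P (n + 1) = k * (P n ^ 2 + Q n ^ 2))
    (hQ : ∀ n, 1 ≤ n → Q (n + 1) = P n * Q n) :
    ∀ n, 1 ≤ n → P n = 2 * k ∧ Q n ^ 2 = 1 := by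
  intro n hn
  induction n, hn using Nat.le_induction with
  | base => exact ⟨hP1, by rw [hQ1, one_pow]⟩
  | succ n hn ih =>
    obtain ⟨hPn, hQn⟩ := ih
    refine ⟨?_, ?_⟩
    · rw [hP n hn, hPn, hQn]
      linear_combination k * hk
    · rw [hQ n hn, mul_pow, hPn, hQn, mul_one, hk]

theorem ZMod.two_mul_intCast_sq_eq_one_of_modEq {k : ℤ} (hk : k ≡ 2 [ZMOD 5] ∨ k ≡ 3 [ZMOD 5]) :
    (2 * (k : ZMod 5)) ^ 2 = 1 := by
  rcases hk with hk | hk <;> rw [(ZMod.intCast_eq_intCast_iff _ _ _).mpr hk] <;> decide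

theorem ZMod.mul_two_mul_eq_three_of_sq {k : ZMod 5} (hk : (2 * k) ^ 2 = 1) : k * (2 * k) = 3 := by
  revert k; decide

theorem Int.not_isSquare_of_not_isSquare_cast {n : ℕ} {x : ℤ} (h : ¬IsSquare (x : ZMod n)) :
    ¬IsSquare x :=
  fun hx => h (by simpa using hx.map (Int.castRingHom (ZMod n)))

theorem stmt7 (k : ℤ) (hk : k ≡ 2 [ZMOD 5] ∨ k ≡ 3 [ZMOD 5]) (P Q : ℕ → ℤ)
    (hP1 : P 1 = 2 * k) (hQ1 : Q 1 = 1)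
    (hP : ∀ n : ℕ, 1 ≤ n → P (n + 1) = k * (P n ^ 2 + Q n ^ 2))
    (hQ : ∀ n : ℕ, 1 ≤ n → Q (n + 1) = P n * Q n)
    (δ : ℕ → ℤ) (hδ : ∀ n, δ n = k * P n) :
    ∀ n : ℕ, 1 ≤ n → δ n ≡ 3 [ZMOD 5] ∧ ¬ IsSquare (δ n) ∧ ¬ IsSquare (-δ n) := by
  intro n hn
  have hk5 := ZMod.two_mul_intCast_sq_eq_one_of_modEq hk
  obtain ⟨hPn, -⟩ := eq_two_mul_and_sq_eq_one_of_recurrence hk5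
    (P := fun n => (P n : ZMod 5)) (Q := fun n => (Q n : ZMod 5))
    (by simp [hP1]) (by simp [hQ1]) (fun n hn => by simp [hP n hn]) (fun n hn => by simp [hQ n hn])
    n hn
  have hδn : (δ n : ZMod 5) = 3 := by
    rw [hδ, Int.cast_mul, hPn, ZMod.mul_two_mul_eq_three_of_sq hk5]
  refine ⟨(ZMod.intCast_eq_intCast_iff _ _ _).mp (by exact_mod_cast hδn), ?_, ?_⟩
  · exact Int.not_isSquare_of_not_isSquare_cast (n := 5) (by rw [hδn]; decide)
  · exact Int.not_isSquare_of_not_isSquare_cast (n := 5) (by push_cast [hδn]; decide)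
end

section
/- Let k be an integer and p an odd prime dividing 4k² − 1. Define P_1 = 2k, Q_1 = 1, P_{n+1} = k(P_n² + Q_n²), Q_{n+1} = P_n·Q_n, and δ_n = k·P_n. Then δ_n ≡ 2k² (mod p) for all n ≥ 1. -/
/-!
Modulo `p` we have `4k² = 1`, so the pair `(P, Q²) = (2k, 1)` is fixed by the recursion:
`k((2k)² + 1) = k · 2` and `(2k)² · 1 = 1`. Hence `P_n ≡ 2k` for all `n ≥ 1` and `δ_n ≡ 2k²`.
-/

theorem eq_two_mul_and_sq_eq_one_of_four_mul_sq_eq_one {R : Type*} [CommRing R] {k : R}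
    (hk : 4 * k ^ 2 = 1) {P Q : ℕ → R} (hP1 : P 1 = 2 * k) (hQ1 : Q 1 = 1)
    (hP : ∀ n, 1 ≤ n → P (n + 1) = k * (P n ^ 2 + Q n ^ 2))
    (hQ : ∀ n, 1 ≤ n → Q (n + 1) = P n * Q n) :
    ∀ n, 1 ≤ n → P n = 2 * k ∧ Q n ^ 2 = 1 := by
  intro n hn
  induction n, hn using Nat.le_induction with
  | base => exact ⟨hP1, by rw [hQ1, one_pow]⟩
  | succ m hm ih =>
    obtain ⟨hPm, hQm⟩ := ih
    have hPm_sq : P m ^ 2 = 1 := by rw [hPm, ← hk]; ring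
    refine ⟨?_, ?_⟩
    · rw [hP m hm, hPm_sq, hQm]; ring
    · rw [hQ m hm, mul_pow, hPm_sq, hQm, one_mul]

theorem stmt8_general (k : ℤ) (p : ℕ)
    (hdvd : (p : ℤ) ∣ (4 * k ^ 2 - 1)) (P Q : ℕ → ℤ)
    (hP1 : P 1 = 2 * k) (hQ1 : Q 1 = 1)
    (hP : ∀ n : ℕ, 1 ≤ n → P (n + 1) = k * (P n ^ 2 + Q n ^ 2))
    (hQ : ∀ n : ℕ, 1 ≤ n → Q (n + 1) = P n * Q n)
    (δ : ℕ → ℤ) (hδ : ∀ n, δ n = k * P n) :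
    ∀ n : ℕ, 1 ≤ n → δ n ≡ 2 * k ^ 2 [ZMOD (p : ℤ)] := by
  intro n hn
  have hk : 4 * (k : ZMod p) ^ 2 = 1 := by
    rw [← sub_eq_zero]
    exact_mod_cast (ZMod.intCast_zmod_eq_zero_iff_dvd _ p).mpr hdvd
  have hPn : (P n : ZMod p) = 2 * k :=
    (eq_two_mul_and_sq_eq_one_of_four_mul_sq_eq_one hk (P := fun n ↦ (P n : ZMod p))
      (Q := fun n ↦ (Q n : ZMod p)) (by simp [hP1]) (by simp [hQ1])
      (fun m hm ↦ by simp [hP m hm]) (fun m hm ↦ by simp [hQ m hm]) n hn).1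
  rw [← ZMod.intCast_eq_intCast_iff, hδ]
  push_cast
  rw [hPn]
  ring

theorem stmt8 (k : ℤ) (p : ℕ) (hp : p.Prime) (hodd : Odd p)
    (hdvd : (p : ℤ) ∣ (4 * k ^ 2 - 1)) (P Q : ℕ → ℤ)
    (hP1 : P 1 = 2 * k) (hQ1 : Q 1 = 1)
    (hP : ∀ n : ℕ, 1 ≤ n → P (n + 1) = k * (P n ^ 2 + Q n ^ 2))
    (hQ : ∀ n : ℕ, 1 ≤ n → Q (n + 1) = P n * Q n)
    (δ : ℕ → ℤ) (hδ : ∀ n, δ n = k * P n) :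
    ∀ n : ℕ, 1 ≤ n → δ n ≡ 2 * k ^ 2 [ZMOD (p : ℤ)] :=
  stmt8_general k p hdvd P Q hP1 hQ1 hP hQ δ hδ
end

section
/- Let k be an integer and p an odd prime dividing 2k² − k + 1 with p not dividing k. Define P_1 = 2k, Q_1 = 1, P_{n+1} = k(P_n² + Q_n²), Q_{n+1} = P_n·Q_n, and δ_n = k·P_n. Then δ_n ≡ δ_2 (mod p) for all n ≥ 2, and moreover δ_2 = k²(4k² + 1) is a square modulo p if and only if −k is a square modulo p. -/
/-!
Modulo `p` we have `2k² = k - 1`, hence `k(4k² + 1) = (2k + 1)(2k² - k + 1) - 1 = -1`.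
So `(P, Q) = (-1, ±2k)` is a fixed point of `(P, Q) ↦ (k(P² + Q²), PQ)` up to the sign of `Q`,
and it is reached at `n = 2`: `(P₂, Q₂) = (k(4k² + 1), 2k)`. Hence `δₙ = k Pₙ ≡ -k` for all `n ≥ 2`;
in particular `δ₂` and `-k` are the same residue, so one is a square iff the other is.
-/

section Recurrence

variable {R : Type*} [CommRing R] {k : R}

lemma mul_four_mul_sq_add_one_eq_neg_one (hk : 2 * k ^ 2 - k + 1 = 0) :
    k * (4 * k ^ 2 + 1) = -1 := by
  linear_combination (2 * k + 1) * hk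

lemma recurrence_step_of_eq_neg_one_of_sq_eq (hk : 2 * k ^ 2 - k + 1 = 0) {x y : R}
    (hx : x = -1) (hy : y ^ 2 = 4 * k ^ 2) :
    k * (x ^ 2 + y ^ 2) = -1 ∧ (x * y) ^ 2 = 4 * k ^ 2 := by
  subst hx
  constructor
  · rw [hy]
    linear_combination mul_four_mul_sq_add_one_eq_neg_one hk
  · rw [mul_pow, hy]
    ring

lemma recurrence_eq_neg_one_and_sq_eq_of_two_le (hk : 2 * k ^ 2 - k + 1 = 0) {P Q : ℕ → R}
    (hP1 : P 1 = 2 * k) (hQ1 : Q 1 = 1)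
    (hP : ∀ n : ℕ, 1 ≤ n → P (n + 1) = k * (P n ^ 2 + Q n ^ 2))
    (hQ : ∀ n : ℕ, 1 ≤ n → Q (n + 1) = P n * Q n) {n : ℕ} (hn : 2 ≤ n) :
    P n = -1 ∧ Q n ^ 2 = 4 * k ^ 2 := by
  induction n, hn using Nat.le_induction with
  | base =>
    rw [hP 1 le_rfl, hQ 1 le_rfl, hP1, hQ1]
    exact ⟨by linear_combination mul_four_mul_sq_add_one_eq_neg_one hk, by ring⟩
  | succ n hn ih =>
    rw [hP n (by omega), hQ n (by omega)]
    exact recurrence_step_of_eq_neg_one_of_sq_eq hk ih.1 ih.2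

end Recurrence

theorem stmt9_general (k : ℤ) (p : ℕ)
    (hdvd : (p : ℤ) ∣ (2 * k ^ 2 - k + 1)) (P Q : ℕ → ℤ)
    (hP1 : P 1 = 2 * k) (hQ1 : Q 1 = 1)
    (hP : ∀ n : ℕ, 1 ≤ n → P (n + 1) = k * (P n ^ 2 + Q n ^ 2))
    (hQ : ∀ n : ℕ, 1 ≤ n → Q (n + 1) = P n * Q n)
    (δ : ℕ → ℤ) (hδ : ∀ n, δ n = k * P n) :
    (∀ n : ℕ, 2 ≤ n → δ n ≡ δ 2 [ZMOD (p : ℤ)]) ∧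
      δ 2 = k ^ 2 * (4 * k ^ 2 + 1) ∧
      (IsSquare ((k ^ 2 * (4 * k ^ 2 + 1) : ℤ) : ZMod p) ↔ IsSquare ((-k : ℤ) : ZMod p)) := by
  have hk : 2 * (k : ZMod p) ^ 2 - k + 1 = 0 := by
    exact_mod_cast (ZMod.intCast_zmod_eq_zero_iff_dvd _ p).2 hdvd
  have hδ_cast {n : ℕ} (hn : 2 ≤ n) : (δ n : ZMod p) = ((-k : ℤ) : ZMod p) := by
    have hPn := (recurrence_eq_neg_one_and_sq_eq_of_two_le hk (P := fun n ↦ (P n : ZMod p))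
      (Q := fun n ↦ (Q n : ZMod p)) (by simp [hP1]) (by simp [hQ1])
      (fun n hn ↦ by simp [hP n hn]) (fun n hn ↦ by simp [hQ n hn]) hn).1
    rw [hδ]
    push_cast
    rw [hPn, mul_neg_one]
  have hδ2 : δ 2 = k ^ 2 * (4 * k ^ 2 + 1) := by
    rw [hδ, hP 1 le_rfl, hP1, hQ1]
    ring
  refine ⟨fun n hn ↦ ?_, hδ2, ?_⟩
  · rw [← ZMod.intCast_eq_intCast_iff, hδ_cast hn, hδ_cast le_rfl]
  · rw [← hδ2, hδ_cast le_rfl]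

theorem stmt9 (k : ℤ) (p : ℕ) (hp : p.Prime) (hodd : Odd p)
    (hdvd : (p : ℤ) ∣ (2 * k ^ 2 - k + 1)) (hk : ¬ (p : ℤ) ∣ k) (P Q : ℕ → ℤ)
    (hP1 : P 1 = 2 * k) (hQ1 : Q 1 = 1)
    (hP : ∀ n : ℕ, 1 ≤ n → P (n + 1) = k * (P n ^ 2 + Q n ^ 2))
    (hQ : ∀ n : ℕ, 1 ≤ n → Q (n + 1) = P n * Q n)
    (δ : ℕ → ℤ) (hδ : ∀ n, δ n = k * P n) :
    (∀ n : ℕ, 2 ≤ n → δ n ≡ δ 2 [ZMOD (p : ℤ)]) ∧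
      δ 2 = k ^ 2 * (4 * k ^ 2 + 1) ∧
      (IsSquare ((k ^ 2 * (4 * k ^ 2 + 1) : ℤ) : ZMod p) ↔ IsSquare ((-k : ℤ) : ZMod p)) :=
  stmt9_general k p hdvd P Q hP1 hQ1 hP hQ δ hδ
end

section
/- Define integer sequences a_n, b_n by a_1 = 2, b_1 = 1, a_{n+1} = a_n² + b_n², b_{n+1} = a_n·b_n, and sequences σ_n, τ_n by σ_1 = 2, τ_1 = 1, σ_{2j} = τ_{2j−1}², σ_{2j+1} = σ_{2j}² + τ_{2j}², and τ_{j+1} = σ_j·τ_j. Then for all j ≥ 1, σ_{2j+1}·b_{j+1} = τ_{2j+1}·a_{j+1}. -/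
/-!
Two steps of the `σ, τ` recursion send `(σ_{2j+1}, τ_{2j+1}) = (x, y)` to
`τ_{2j+1}² • (x² + y², x y)`, a scalar multiple of the step `(a, b) ↦ (a² + b², a b)` of the
other recursion. That step is homogeneous, so it maps proportional pairs to proportional pairs,
and induction from `σ₁ : τ₁ = a₁ : b₁ = 2 : 1` gives the claim.
-/

theorem sq_add_sq_mul_eq_of_mul_eq {R : Type*} [CommRing R] {x y u v : R}
    (h : x * v = y * u) : (x ^ 2 + y ^ 2) * (u * v) = x * y * (u ^ 2 + v ^ 2) := by
  linear_combination (x * u - y * v) * h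

theorem sigma_tau_odd_succ (σ τ : ℕ → ℤ)
    (hσeven : ∀ j : ℕ, 1 ≤ j → σ (2 * j) = τ (2 * j - 1) ^ 2)
    (hσodd : ∀ j : ℕ, 1 ≤ j → σ (2 * j + 1) = σ (2 * j) ^ 2 + τ (2 * j) ^ 2)
    (hτ : ∀ j : ℕ, 1 ≤ j → τ (j + 1) = σ j * τ j) (j : ℕ) :
    σ (2 * (j + 1) + 1) = τ (2 * j + 1) ^ 2 * (σ (2 * j + 1) ^ 2 + τ (2 * j + 1) ^ 2) ∧
      τ (2 * (j + 1) + 1) = τ (2 * j + 1) ^ 2 * (σ (2 * j + 1) * τ (2 * j + 1)) := by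
  have hσ_even : σ (2 * (j + 1)) = τ (2 * j + 1) ^ 2 := by
    simpa [show 2 * (j + 1) - 1 = 2 * j + 1 by omega] using hσeven (j + 1) (by omega)
  have hτ_even : τ (2 * (j + 1)) = σ (2 * j + 1) * τ (2 * j + 1) := by
    simpa [show 2 * (j + 1) = 2 * j + 1 + 1 by ring] using hτ (2 * j + 1) (by omega)
  rw [hσodd (j + 1) (by omega), hτ (2 * (j + 1)) (by omega), hσ_even, hτ_even]
  constructor <;> ring

theorem stmt11 (a b σ τ : ℕ → ℤ)
    (ha1 : a 1 = 2) (hb1 : b 1 = 1)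
    (ha : ∀ n : ℕ, 1 ≤ n → a (n + 1) = a n ^ 2 + b n ^ 2)
    (hb : ∀ n : ℕ, 1 ≤ n → b (n + 1) = a n * b n)
    (hσ1 : σ 1 = 2) (hτ1 : τ 1 = 1)
    (hσeven : ∀ j : ℕ, 1 ≤ j → σ (2 * j) = τ (2 * j - 1) ^ 2)
    (hσodd : ∀ j : ℕ, 1 ≤ j → σ (2 * j + 1) = σ (2 * j) ^ 2 + τ (2 * j) ^ 2)
    (hτ : ∀ j : ℕ, 1 ≤ j → τ (j + 1) = σ j * τ j) :
    ∀ j : ℕ, 1 ≤ j → σ (2 * j + 1) * b (j + 1) = τ (2 * j + 1) * a (j + 1) := by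
  suffices key : ∀ j : ℕ, σ (2 * j + 1) * b (j + 1) = τ (2 * j + 1) * a (j + 1) from
    fun j _ => key j
  intro j
  induction j with
  | zero => simp [ha1, hb1, hσ1, hτ1]
  | succ j ih =>
    obtain ⟨hσ_succ, hτ_succ⟩ := sigma_tau_odd_succ σ τ hσeven hσodd hτ j
    rw [hσ_succ, hτ_succ, ha (j + 1) (by omega), hb (j + 1) (by omega), mul_assoc, mul_assoc,
      sq_add_sq_mul_eq_of_mul_eq ih]
end

section
/- Define integer sequences a_n, b_n by a_1 = 2, b_1 = 1, a_{n+1} = a_n² + b_n², b_{n+1} = a_n·b_n. Then for all n ≥ 1, gcd(a_n, b_n) = 1; moreover for all n ≥ 2, a_n is odd and every prime divisor of a_n is congruent to 1 modulo 4. -/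
/-!
Since `a_{n+1} = a_n² + b_n²` and `b_{n+1} = a_n b_n`, coprimality of `(a_n, b_n)` propagates:
a common factor of `a_n² + b_n²` and `a_n` (or `b_n`) would divide `b_n²` (or `a_n²`).
From `n = 2` on, `a_n` is odd and `b_n` even, so an odd prime `p ∣ a_{n+1}` makes `-1` a square
modulo `p` (as `b_n ≢ 0 mod p`), which forces `p ≡ 1 mod 4`.
-/

theorem IsCoprime.sq_add_sq_left {R : Type*} [CommRing R] {x y : R} (h : IsCoprime x y) :
    IsCoprime (x ^ 2 + y ^ 2) y := by
  simpa only [sq y] using h.pow_left.add_mul_right_left y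

theorem IsCoprime.sq_add_sq_mul {R : Type*} [CommRing R] {x y : R} (h : IsCoprime x y) :
    IsCoprime (x ^ 2 + y ^ 2) (x * y) := by
  have hx : IsCoprime (x ^ 2 + y ^ 2) x := add_comm (y ^ 2) (x ^ 2) ▸ h.symm.sq_add_sq_left
  exact hx.mul_right h.sq_add_sq_left

theorem Nat.Prime.mod_four_ne_three_of_dvd_sq_add_sq {p : ℕ} (hp : p.Prime) {x y : ℤ}
    (hxy : IsCoprime x y) (hdvd : (p : ℤ) ∣ x ^ 2 + y ^ 2) : p % 4 ≠ 3 := by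
  have := Fact.mk hp
  have hy : (y : ZMod p) ≠ 0 := by
    rw [Ne, ZMod.intCast_zmod_eq_zero_iff_dvd]
    intro hpy
    exact (Nat.prime_iff_prime_int.mp hp).not_isUnit (hxy.sq_add_sq_left.isUnit_of_dvd' hdvd hpy)
  have hxy : (x : ZMod p) ^ 2 = -(y : ZMod p) ^ 2 := by
    rw [eq_neg_iff_add_eq_zero]
    exact_mod_cast (ZMod.intCast_zmod_eq_zero_iff_dvd _ p).2 hdvd
  exact ZMod.mod_four_ne_three_of_sq_eq_neg_sq' hy hxy

theorem Nat.Prime.mod_four_eq_one_of_dvd_odd_sq_add_sq {p : ℕ} (hp : p.Prime) {x y : ℤ}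
    (hxy : IsCoprime x y) (hodd : Odd (x ^ 2 + y ^ 2)) (hdvd : (p : ℤ) ∣ x ^ 2 + y ^ 2) :
    p % 4 = 1 := by
  have hp2 : p ≠ 2 := by
    rintro rfl
    exact Int.not_even_iff_odd.2 hodd (even_iff_two_dvd.2 hdvd)
  have := hp.mod_four_ne_three_of_dvd_sq_add_sq hxy hdvd
  have := Nat.odd_mod_four_iff.1 ((hp.mod_two_eq_one_iff_ne_two).2 hp2)
  omega

theorem stmt12 (a b : ℕ → ℤ)
    (ha1 : a 1 = 2) (hb1 : b 1 = 1)
    (ha : ∀ n : ℕ, 1 ≤ n → a (n + 1) = a n ^ 2 + b n ^ 2)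
    (hb : ∀ n : ℕ, 1 ≤ n → b (n + 1) = a n * b n) :
    (∀ n : ℕ, 1 ≤ n → Int.gcd (a n) (b n) = 1) ∧
      (∀ n : ℕ, 2 ≤ n → Odd (a n) ∧
        ∀ p : ℕ, p.Prime → (p : ℤ) ∣ a n → p % 4 = 1) := by
  have hcop : ∀ n, 1 ≤ n → IsCoprime (a n) (b n) := by
    intro n hn
    induction n, hn using Nat.le_induction with
    | base => simp [ha1, hb1]
    | succ n hn ih => rw [ha n hn, hb n hn]; exact ih.sq_add_sq_mul
  have hpar : ∀ n, 2 ≤ n → Odd (a n) ∧ Even (b n) := by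
    intro n hn
    induction n, hn using Nat.le_induction with
    | base => rw [ha 1 le_rfl, hb 1 le_rfl, ha1, hb1]; decide
    | succ n hn ih =>
      rw [ha n (by omega), hb n (by omega)]
      exact ⟨ih.1.pow.add_even (ih.2.pow_of_ne_zero two_ne_zero), ih.2.mul_left _⟩
  refine ⟨fun n hn => Int.isCoprime_iff_gcd_eq_one.1 (hcop n hn),
    fun n hn => ⟨(hpar n hn).1, ?_⟩⟩
  obtain ⟨m, rfl⟩ : ∃ m, n = m + 1 := ⟨n - 1, by omega⟩
  have hodd := (hpar (m + 1) hn).1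
  rw [ha m (by omega)] at hodd ⊢
  exact fun p hp => hp.mod_four_eq_one_of_dvd_odd_sq_add_sq (hcop m (by omega)) hodd
end

section
/- Let k, b ∈ ℚ be nonzero and suppose that none of −b, 4k² + 1, and −b(4k² + 1) is a square in ℚ. Then the quartic polynomial k²(x² + b)² + b x² is irreducible over ℚ. -/
/-!
Both the root test and the test for a factorization into two monic quadratics reduce to
square conditions on the coefficients of a biquadratic `X ^ 4 + p X ^ 2 + q`. A root `r` makes
`p ^ 2 - 4 q = (2 r ^ 2 + p) ^ 2` a square. If `(X ^ 2 + a₁ X + a₀) (X ^ 2 + b₁ X + b₀)` is the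
factorization, either `a₁ = b₁ = 0`, and then `p ^ 2 - 4 q = (a₀ - b₀) ^ 2`, or `b₁ = -a₁` and
`a₀ = b₀ = s`, so that `s ^ 2 = q` and `2 s - p = a₁ ^ 2`. After dividing by `k ^ 2` we get
`p = (2 k ^ 2 + 1) b / k ^ 2` and `q = b ^ 2`, so `s = ± b`, and the three square conditions
become, up to square factors, `4 k ^ 2 + 1`, `-b` and `-b (4 k ^ 2 + 1)`.
-/

namespace Polynomial

theorem Monic.eq_X_sq_add_C_mul_X_add_C {R : Type*} [CommSemiring R] {f : R[X]} (hf : f.Monic)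
    (h : f.natDegree = 2) : f = X ^ 2 + C (f.coeff 1) * X + C (f.coeff 0) := by
  have h₂ : f.coeff 2 = 1 := h ▸ hf.coeff_natDegree
  conv_lhs => rw [f.as_sum_range_C_mul_X_pow, h]
  simp only [Finset.sum_range_succ, Finset.sum_range_zero, h₂, map_one]
  ring

theorem sq_sub_four_mul_eq_sq_of_isRoot {R : Type*} [CommRing R] {p q r : R}
    (hr : (X ^ 4 + C p * X ^ 2 + C q : R[X]).IsRoot r) : p ^ 2 - 4 * q = (2 * r ^ 2 + p) ^ 2 := by
  simp only [IsRoot, eval_add, eval_mul, eval_pow, eval_C, eval_X] at hr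
  linear_combination -4 * hr

theorem isSquare_or_of_quadratic_mul_quadratic_eq {R : Type*} [CommRing R] [IsDomain R]
    {p q a₀ a₁ b₀ b₁ : R}
    (h : (X ^ 2 + C a₁ * X + C a₀) * (X ^ 2 + C b₁ * X + C b₀) = X ^ 4 + C p * X ^ 2 + C q) :
    IsSquare (p ^ 2 - 4 * q) ∨ ∃ s, s ^ 2 = q ∧ IsSquare (2 * s - p) := by
  have hexp : (X ^ 2 + C a₁ * X + C a₀) * (X ^ 2 + C b₁ * X + C b₀) = X ^ 4 + C (a₁ + b₁) * X ^ 3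
      + C (a₀ + a₁ * b₁ + b₀) * X ^ 2 + C (a₀ * b₁ + a₁ * b₀) * X + C (a₀ * b₀) := by
    simp only [map_add, map_mul]
    ring
  rw [hexp] at h
  have hc (n : ℕ) := congrArg (coeff · n) h
  have h₃ := hc 3; have h₂ := hc 2; have h₁ := hc 1; have h₀ := hc 0
  simp only [coeff_add, coeff_C_mul, coeff_X_pow, coeff_X, coeff_C] at h₃ h₂ h₁ h₀
  norm_num at h₃ h₂ h₁ h₀
  rcases eq_or_ne a₁ 0 with rfl | ha₁
  · obtain rfl : b₁ = 0 := by linear_combination h₃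
    exact Or.inl ⟨a₀ - b₀, by linear_combination -(a₀ + b₀ + p) * h₂ + 4 * h₀⟩
  · have hab : a₀ = b₀ := by
      have : a₁ * (a₀ - b₀) = 0 := by linear_combination a₀ * h₃ - h₁
      linear_combination (mul_eq_zero.mp this).resolve_left ha₁
    refine Or.inr ⟨a₀, by linear_combination h₀ + a₀ * hab, a₁, ?_⟩
    linear_combination h₂ + hab - a₁ * h₃

theorem irreducible_X_pow_four_add_C_mul_X_sq_add_C {K : Type*} [Field K] {p q : K}
    (hdisc : ¬ IsSquare (p ^ 2 - 4 * q)) (hs : ∀ s, s ^ 2 = q → ¬ IsSquare (2 * s - p)) :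
    Irreducible (X ^ 4 + C p * X ^ 2 + C q : K[X]) := by
  have hmonic : (X ^ 4 + C p * X ^ 2 + C q : K[X]).Monic := by monicity!
  have hdeg : (X ^ 4 + C p * X ^ 2 + C q : K[X]).natDegree = 4 := by compute_degree!
  refine hmonic.irreducible_iff_natDegree'.mpr ⟨fun h => by simp [h] at hdeg, ?_⟩
  intro f g hf hg hfg hg_deg
  rw [hdeg, Finset.mem_Ioc] at hg_deg
  obtain hg₁ | hg₂ : g.natDegree = 1 ∨ g.natDegree = 2 := by omega
  · obtain ⟨r, hr⟩ :=
      exists_root_of_degree_eq_one ((degree_eq_iff_natDegree_eq_of_pos one_pos).mpr hg₁)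
    have hr' := sq_sub_four_mul_eq_sq_of_isRoot (hr.dvd ⟨f, hfg ▸ mul_comm f g⟩)
    exact hdisc ⟨_, hr'.trans (sq _)⟩
  · have hf₂ : f.natDegree = 2 := by
      have := congrArg natDegree hfg
      rw [hf.natDegree_mul hg, hdeg] at this
      omega
    rw [hf.eq_X_sq_add_C_mul_X_add_C hf₂, hg.eq_X_sq_add_C_mul_X_add_C hg₂] at hfg
    obtain hsq | ⟨s, hs₂, hsq⟩ := isSquare_or_of_quadratic_mul_quadratic_eq hfg
    exacts [hdisc hsq, hs s hs₂ hsq]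

end Polynomial

theorem isSquare_of_isSquare_sq_mul {K : Type*} [Field K] {x y : K} (hx : x ≠ 0)
    (h : IsSquare (x ^ 2 * y)) : IsSquare y := by
  obtain ⟨r, hr⟩ := h
  exact ⟨r / x, by field_simp; linear_combination hr⟩

open Polynomial in
theorem stmt15 (k b : ℚ) (hk : k ≠ 0) (hb : b ≠ 0)
    (h1 : ¬ IsSquare (-b)) (h2 : ¬ IsSquare (4 * k ^ 2 + 1))
    (h3 : ¬ IsSquare (-b * (4 * k ^ 2 + 1))) :
    Irreducible (C (k ^ 2) * (X ^ 2 + C b) ^ 2 + C b * X ^ 2 : ℚ[X]) := by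
  have hk₂ : k ^ 2 ≠ 0 := pow_ne_zero 2 hk
  obtain ⟨p, hp⟩ : ∃ p, k ^ 2 * p = (2 * k ^ 2 + 1) * b := ⟨_, mul_div_cancel₀ _ hk₂⟩
  have hscale : C (k ^ 2) * (X ^ 2 + C b) ^ 2 + C b * X ^ 2 =
      C (k ^ 2) * (X ^ 4 + C p * X ^ 2 + C (b ^ 2)) := by
    have hpC : C (k ^ 2) * C p = 2 * C (k ^ 2) * C b + C b := by
      rw [← C_mul, hp]
      simp only [map_mul, map_add, map_ofNat, map_one]
      ring
    linear_combination (-X ^ 2 : ℚ[X]) * hpC - C (k ^ 2) * map_pow C b 2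
  rw [hscale, irreducible_isUnit_mul (isUnit_C.mpr hk₂.isUnit)]
  refine irreducible_X_pow_four_add_C_mul_X_sq_add_C (fun h => h2 ?_) fun s hs h => ?_
  · have e : p ^ 2 - 4 * b ^ 2 = (b / k ^ 2) ^ 2 * (4 * k ^ 2 + 1) := by
      field_simp
      linear_combination (k ^ 2 * p + (2 * k ^ 2 + 1) * b) * hp
    exact isSquare_of_isSquare_sq_mul (div_ne_zero hb hk₂) (e ▸ h)
  · rcases sq_eq_sq_iff_eq_or_eq_neg.mp hs with hsb | hsb <;> rw [hsb] at h
    · have e : 2 * b - p = k⁻¹ ^ 2 * -b := by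
        field_simp
        linear_combination -hp
      exact h1 (isSquare_of_isSquare_sq_mul (inv_ne_zero hk) (e ▸ h))
    · have e : 2 * -b - p = k⁻¹ ^ 2 * (-b * (4 * k ^ 2 + 1)) := by
        field_simp
        linear_combination -hp
      exact h3 (isSquare_of_isSquare_sq_mul (inv_ne_zero hk) (e ▸ h))
end

section
/- Work in the polynomial ring ℤ[k]. Define P_1 = 2k, Q_1 = 1, P_{n+1} = k(P_n² + Q_n²), Q_{n+1} = P_n·Q_n. Let s(n) = (2^n − (−1)^n)/3. Then for every n ≥ 1, k^{s(n)} divides P_n in ℤ[k], and P_n / k^{s(n)} is not divisible by k (i.e., s(n) is the exact power of k dividing P_n). -/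
/-!
Write `P n = X ^ a * A` and `Q n = X ^ b * B` with `A(0), B(0) ≠ 0`. If `b ≤ a`, then
`P (n + 1) = X ^ (2b + 1) * ((X ^ (a - b) * A) ^ 2 + B ^ 2)`, whose cofactor has constant term a sum
of squares with `B(0) ^ 2 > 0`, so no cancellation occurs; and `Q (n + 1) = X ^ (a + b) * (A * B)`.
Starting from `(a, b) = (1, 0)`, the orders follow the Jacobsthal numbers
`s n = (2 ^ n - (-1) ^ n) / 3`: one has `a = s n` and `2b + 1 = s (n + 1)`, which is preserved because
`s (n + 2) = s (n + 1) + 2 s n`, and `b ≤ a` because `s (n + 1) = 2 s n + (-1) ^ n`.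
-/

open Polynomial

section Jacobsthal

variable {s : ℕ → ℕ} (hs : ∀ n : ℕ, 3 * (s n : ℤ) = 2 ^ n - (-1) ^ n)
include hs

theorem jacobsthal_succ (n : ℕ) : (s (n + 1) : ℤ) = 2 * s n + (-1) ^ n := by
  have h := hs (n + 1)
  rw [pow_succ, pow_succ] at h
  linarith [hs n]

theorem jacobsthal_succ_succ (n : ℕ) : s (n + 2) = s (n + 1) + 2 * s n := by
  have h := jacobsthal_succ hs (n + 1)
  rw [pow_succ] at h
  zify
  linarith [jacobsthal_succ hs n]

theorem jacobsthal_succ_le (n : ℕ) : s (n + 1) ≤ 2 * s n + 1 := by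
  have h := jacobsthal_succ hs n
  zify
  rcases neg_one_pow_eq_or ℤ n with h1 | h1 <;> linarith

theorem jacobsthal_one : s 1 = 1 := by
  have h := hs 1
  norm_num at h
  omega

theorem jacobsthal_two : s 2 = 1 := by
  have h := hs 2
  norm_num at h
  omega

end Jacobsthal

section Order

variable {R : Type*} [CommRing R] [LinearOrder R] [IsStrictOrderedRing R]

theorem eval_zero_sq_add_sq_ne_zero (A : R[X]) {B : R[X]} (hB : B.eval 0 ≠ 0) :
    (A ^ 2 + B ^ 2).eval 0 ≠ 0 := by
  rw [eval_add, eval_pow, eval_pow]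
  exact (add_pos_of_nonneg_of_pos (sq_nonneg _) (sq_pos_of_ne_zero hB)).ne'

theorem exists_X_pow_mul_of_sq_add_sq {a b : ℕ} (hba : b ≤ a) {A B : R[X]}
    (hA : A.eval 0 ≠ 0) (hB : B.eval 0 ≠ 0) :
    ∃ A' B' : R[X], X * ((X ^ a * A) ^ 2 + (X ^ b * B) ^ 2) = X ^ (2 * b + 1) * A' ∧
      X ^ a * A * (X ^ b * B) = X ^ (a + b) * B' ∧ A'.eval 0 ≠ 0 ∧ B'.eval 0 ≠ 0 := by
  obtain ⟨d, rfl⟩ := Nat.exists_eq_add_of_le hba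
  refine ⟨(X ^ d * A) ^ 2 + B ^ 2, A * B, by ring, by ring,
    eval_zero_sq_add_sq_ne_zero _ hB, ?_⟩
  rw [eval_mul]
  exact mul_ne_zero hA hB

end Order

open Polynomial in
theorem stmt17 (P Q : ℕ → ℤ[X])
    (hP1 : P 1 = 2 * X) (hQ1 : Q 1 = 1)
    (hP : ∀ n : ℕ, 1 ≤ n → P (n + 1) = X * ((P n) ^ 2 + (Q n) ^ 2))
    (hQ : ∀ n : ℕ, 1 ≤ n → Q (n + 1) = P n * Q n)
    (s : ℕ → ℕ) (hs : ∀ n : ℕ, 3 * (s n : ℤ) = 2 ^ n - (-1) ^ n) :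
    ∀ n : ℕ, 1 ≤ n → ∃ R : ℤ[X], P n = X ^ (s n) * R ∧ ¬ (X : ℤ[X]) ∣ R := by
  have orders : ∀ n, 1 ≤ n → ∃ (b : ℕ) (A B : ℤ[X]), 2 * b + 1 = s (n + 1) ∧
      P n = X ^ s n * A ∧ Q n = X ^ b * B ∧ A.eval 0 ≠ 0 ∧ B.eval 0 ≠ 0 := by
    intro n hn
    induction n, hn using Nat.le_induction with
    | base =>
      refine ⟨0, 2, 1, by rw [jacobsthal_two hs], ?_, by simp [hQ1], by simp, by simp⟩
      rw [hP1, jacobsthal_one hs, pow_one, mul_comm]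
    | succ n hn ih =>
      obtain ⟨b, A, B, hb, hPn, hQn, hA, hB⟩ := ih
      have hba : b ≤ s n := by linarith [jacobsthal_succ_le hs n]
      obtain ⟨A', B', hP', hQ', hA', hB'⟩ := exists_X_pow_mul_of_sq_add_sq hba hA hB
      refine ⟨s n + b, A', B', ?_, ?_, ?_, hA', hB'⟩
      · rw [jacobsthal_succ_succ hs n, ← hb]
        ring
      · rw [hP n hn, hPn, hQn, hP', hb]
      · rw [hQ n hn, hPn, hQn, hQ']
  intro n hn
  obtain ⟨-, A, -, -, hPn, -, hA, -⟩ := orders n hn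
  exact ⟨A, hPn, by rwa [X_dvd_iff, coeff_zero_eq_eval_zero]⟩
end
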